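/- arXiv:2503.12744 — 2 statements merged into one kernel-verified Lean document; each statement's English description precedes it below -/
import Mathlib

section
/- Let d ≥ 2, and let n, m be positive integers with m ≥ 2. For any fixed set of points x_1, …, x_n ∈ ℝ^d, there exist two irreducible shallow ReLU networks f_N and f_{N'}, each with exactly m neurons, such that f_N(x_j) = f_{N'}(x_j) for j = 1, …, n, while there exists some x ∈ ℝ^d with f_N(x) ≠ f_{N'}(x). -/
open Finset Filter Topology

/-- The ReLU activation function. -/
noncomputable def relu (x : ℝ) : ℝ := max x 0

/-- Dot product on `ℝ^d`. -/
noncomputable def dotp {d : ℕ} (a x : Fin d → ℝ) : ℝ := ∑ i, a i * x i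

/-- A shallow ReLU network with `m` neurons. -/
noncomputable def reluNet {d m : ℕ} (a : Fin m → Fin d → ℝ) (b s : Fin m → ℝ) (c : ℝ)
    (x : Fin d → ℝ) : ℝ :=
  (∑ k, s k * relu (dotp (a k) x + b k)) + c

/-- `f`, viewed as a network with `m` neurons, is irreducible: no shallow ReLU network with
fewer than `m` neurons agrees with `f` everywhere. -/
def IrreducibleNet {d : ℕ} (m : ℕ) (f : (Fin d → ℝ) → ℝ) : Prop :=
  ¬ ∃ m' < m, ∃ (a : Fin m' → Fin d → ℝ) (b s : Fin m' → ℝ) (c : ℝ),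
    ∀ x, reluNet a b s c x = f x

lemma relu_of_nonpos {x : ℝ} (h : x ≤ 0) : relu x = 0 := max_eq_right h
lemma relu_of_nonneg {x : ℝ} (h : 0 ≤ x) : relu x = x := max_eq_left h
lemma relu_nonneg (x : ℝ) : 0 ≤ relu x := le_max_right x 0

lemma relu_add_relu_neg (x : ℝ) : relu x + relu (-x) = |x| := by
  rcases le_total x 0 with h | h
  · rw [relu_of_nonpos h, relu_of_nonneg (by linarith), abs_of_nonpos h]; ring
  · rw [relu_of_nonneg h, relu_of_nonpos (by linarith), abs_of_nonneg h]; ring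

lemma relu_symm_cancel {q x : ℝ} (hx : |x| < |q|) :
    relu (q + x) + relu (q - x) - 2 * relu q = 0 := by
  rcases lt_trichotomy q 0 with hq | hq | hq
  · have h := abs_lt.mp (hx.trans_eq (abs_of_neg hq))
    rw [relu_of_nonpos (by linarith [h.2]), relu_of_nonpos (by linarith [h.1]),
      relu_of_nonpos hq.le]; ring
  · rw [hq] at hx; simp at hx; linarith [abs_nonneg x, hx]
  · have h := abs_lt.mp (hx.trans_eq (abs_of_pos hq))
    rw [relu_of_nonneg (by linarith [h.1]), relu_of_nonneg (by linarith [h.2]),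
      relu_of_nonneg hq.le]; ring

lemma kink_single (s α β p : ℝ) :
    Tendsto (fun ε : ℝ => (s * relu (α*(p+ε)+β) + s * relu (α*(p-ε)+β)
        - 2*(s*relu (α*p+β)))/ε)
      (nhdsWithin 0 (Set.Ioi 0)) (nhds (if α*p+β = 0 then s * |α| else 0)) := by
  by_cases h : α*p+β = 0
  · rw [if_pos h]
    apply Tendsto.congr' _ tendsto_const_nhds
    filter_upwards [self_mem_nhdsWithin] with ε (hε : ε ∈ Set.Ioi 0)
    have hε' : (0:ℝ) < ε := hε
    have h1 : α*(p+ε)+β = α*ε := by linear_combination h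
    have h2 : α*(p-ε)+β = -(α*ε) := by linear_combination h
    rw [h1, h2, h, relu_of_nonpos le_rfl,
      show s*relu (α*ε) + s*relu (-(α*ε)) - 2*(s*0) = s*(relu (α*ε) + relu (-(α*ε))) by ring,
      relu_add_relu_neg, abs_mul, abs_of_pos hε']
    field_simp
  · rw [if_neg h]
    apply Tendsto.congr' _ tendsto_const_nhds
    have hq : 0 < |α*p+β| := abs_pos.mpr h
    have hδ : (0:ℝ) < |α*p+β| / (|α|+1) := by positivity
    filter_upwards [Ioo_mem_nhdsGT_of_mem (Set.mem_Ico.mpr ⟨le_refl 0, hδ⟩)] with ε hε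
    obtain ⟨hε0, hεδ⟩ := hε
    have key : |α*ε| < |α*p+β| := by
      rw [abs_mul, abs_of_pos hε0]
      have h1 : |α| * ε ≤ |α| * (|α*p+β|/(|α|+1)) :=
        mul_le_mul_of_nonneg_left hεδ.le (abs_nonneg α)
      have h2 : |α| * (|α*p+β|/(|α|+1)) < |α*p+β| := by
        rw [mul_div_assoc']
        rw [div_lt_iff₀ (by positivity)]
        nlinarith [abs_nonneg α]
      linarith
    have h1 : α*(p+ε)+β = (α*p+β) + α*ε := by ring
    have h2 : α*(p-ε)+β = (α*p+β) - α*ε := by ring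
    rw [h1, h2, show s * relu (α*p+β + α*ε) + s * relu (α*p+β - α*ε) - 2*(s*relu (α*p+β))
      = s * (relu (α*p+β + α*ε) + relu (α*p+β - α*ε) - 2 * relu (α*p+β)) by ring,
      relu_symm_cancel key]
    simp


lemma kink_net {m : ℕ} (α β s : Fin m → ℝ) (c p : ℝ) :
    Tendsto (fun ε : ℝ =>
        (((∑ k, s k * relu (α k*(p+ε)+β k)) + c) + ((∑ k, s k * relu (α k*(p-ε)+β k)) + c)
          - 2*((∑ k, s k * relu (α k*p+β k)) + c))/ε)
      (nhdsWithin 0 (Set.Ioi 0)) (nhds (∑ k, if α k*p+β k = 0 then s k * |α k| else 0)) := by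
  have h := tendsto_finset_sum (univ : Finset (Fin m))
    (fun k _ => kink_single (s k) (α k) (β k) p)
  refine h.congr fun ε => ?_
  rw [← Finset.sum_div]
  congr 1
  rw [Finset.sum_sub_distrib, Finset.sum_add_distrib, ← Finset.mul_sum]
  ring

lemma kink_eq {m m' : ℕ} (α β s : Fin m → ℝ) (c : ℝ) (α' β' s' : Fin m' → ℝ) (c' : ℝ)
    (heq : ∀ t, (∑ k, s k * relu (α k*t+β k)) + c = (∑ k, s' k * relu (α' k*t+β' k)) + c')
    (p : ℝ) :
    (∑ k, if α k*p+β k = 0 then s k * |α k| else 0)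
      = ∑ k, if α' k*p+β' k = 0 then s' k * |α' k| else 0 := by
  refine tendsto_nhds_unique (kink_net α β s c p) ?_
  refine (kink_net α' β' s' c' p).congr fun ε => ?_
  rw [heq (p+ε), heq (p-ε), heq p]

lemma card_le_of_net_eq {m m' : ℕ} (α β s : Fin m → ℝ) (c : ℝ)
    (α' β' s' : Fin m' → ℝ) (c' : ℝ)
    (heq : ∀ t, (∑ k, s k * relu (α k*t+β k)) + c = (∑ k, s' k * relu (α' k*t+β' k)) + c')
    (P : Fin m → ℝ) (hPinj : Function.Injective P)
    (hP : ∀ k, (∑ j, if α j * P k + β j = 0 then s j * |α j| else 0) ≠ 0) : m ≤ m' := by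
  have hJ : ∀ k : Fin m, ∃ j : Fin m', α' j * P k + β' j = 0 ∧ α' j ≠ 0 := by
    intro k
    have h : (∑ j, if α' j * P k + β' j = 0 then s' j * |α' j| else 0) ≠ 0 := by
      rw [← kink_eq α β s c α' β' s' c' heq (P k)]; exact hP k
    obtain ⟨j, _, hj⟩ := Finset.exists_ne_zero_of_sum_ne_zero h
    by_cases hc : α' j * P k + β' j = 0
    · refine ⟨j, hc, ?_⟩
      rw [if_pos hc] at hj
      have := right_ne_zero_of_mul hj
      exact abs_ne_zero.mp this
    · rw [if_neg hc] at hj; exact absurd rfl hj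
  choose J hJ1 hJ2 using hJ
  have hJinj : Function.Injective J := by
    intro k1 k2 hk
    apply hPinj
    have h1 := hJ1 k1
    have h2 := hJ1 k2
    rw [hk] at h1
    have hα := hJ2 k2
    have : α' (J k2) * P k1 = α' (J k2) * P k2 := by linarith
    exact mul_left_cancel₀ hα this
  simpa using Fintype.card_le_of_injective J hJinj

lemma dotp_e0 {d : ℕ} (h0 : 0 < d) (v : Fin d → ℝ) :
    dotp (fun i => if i = (⟨0,h0⟩ : Fin d) then (1:ℝ) else 0) v = v ⟨0,h0⟩ := by
  unfold dotp
  rw [Finset.sum_congr rfl (fun i _ => by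
    rw [ite_mul, one_mul, zero_mul] :
      ∀ i ∈ univ, (if i = (⟨0,h0⟩ : Fin d) then (1:ℝ) else 0) * v i
        = if i = (⟨0,h0⟩ : Fin d) then v i else 0)]
  simp

lemma line_eval {d : ℕ} (h0 : 0 < d) {m : ℕ} (a : Fin m → Fin d → ℝ) (b s : Fin m → ℝ)
    (c t : ℝ) :
    reluNet a b s c (fun i => if i = (⟨0,h0⟩ : Fin d) then t else 0)
      = (∑ k, s k * relu (a k ⟨0,h0⟩ * t + b k)) + c := by
  unfold reluNet
  congr 1
  refine Finset.sum_congr rfl fun k _ => ?_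
  congr 2
  unfold dotp
  rw [Finset.sum_congr rfl (fun i _ => by
    rw [mul_ite, mul_zero] :
      ∀ i ∈ univ, a k i * (if i = (⟨0,h0⟩ : Fin d) then t else 0)
        = if i = (⟨0,h0⟩ : Fin d) then a k i * t else 0)]
  simp

lemma irred_line {d : ℕ} (h0 : 0 < d) (m : ℕ) (C : ℝ) :
    IrreducibleNet m (reluNet (fun _ (i : Fin d) => if i = (⟨0,h0⟩ : Fin d) then (1:ℝ) else 0)
      (fun k : Fin m => -(C + (k:ℕ) + 1)) (fun _ => 1) 0) := by
  rintro ⟨m', hm', a'', b'', s'', c'', hf⟩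
  have heq : ∀ t, (∑ k : Fin m, (fun _ : Fin m => (1:ℝ)) k *
        relu ((fun _ : Fin m => (1:ℝ)) k * t + (fun k : Fin m => -(C + (k:ℕ) + 1)) k)) + 0
      = (∑ k, s'' k * relu (a'' k ⟨0,h0⟩ * t + b'' k)) + c'' := by
    intro t
    have h1 := hf (fun i => if i = (⟨0,h0⟩ : Fin d) then t else 0)
    rw [line_eval h0, line_eval h0] at h1
    rw [h1]
    simp
  have hle : m ≤ m' := by
    refine card_le_of_net_eq _ _ _ 0 (fun j => a'' j ⟨0,h0⟩) b'' s'' c'' heq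
      (fun k : Fin m => C + (k:ℕ) + 1) ?_ ?_
    · intro k1 k2 h
      simp only at h
      have : ((k1:ℕ):ℝ) = ((k2:ℕ):ℝ) := by linarith
      exact Fin.ext (Nat.cast_inj.mp this)
    · intro k
      have hcond : ∀ j : Fin m,
          ((fun _ : Fin m => (1:ℝ)) j * (C + (k:ℕ) + 1) + (fun j : Fin m => -(C + (j:ℕ) + 1)) j = 0)
            ↔ j = k := by
        intro j
        simp only [one_mul]
        rw [Fin.ext_iff, ← Nat.cast_inj (R := ℝ)]
        constructor <;> intro h <;> linarith
      rw [Finset.sum_congr rfl (fun j _ => if_congr (hcond j) rfl rfl)]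
      simp
  omega

lemma eval_zero {d : ℕ} (h0 : 0 < d) {m : ℕ} (C : ℝ) (v : Fin d → ℝ)
    (hv : v ⟨0,h0⟩ ≤ C) :
    reluNet (fun _ (i : Fin d) => if i = (⟨0,h0⟩ : Fin d) then (1:ℝ) else 0)
      (fun k : Fin m => -(C + (k:ℕ) + 1)) (fun _ => 1) 0 v = 0 := by
  unfold reluNet
  rw [Finset.sum_eq_zero, zero_add]
  intro k _
  simp only [dotp_e0 h0, one_mul]
  exact relu_of_nonpos (by
    have : (0:ℝ) ≤ ((k:ℕ):ℝ) := Nat.cast_nonneg _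
    linarith)

/-- No finite point set can distinguish all pairs of irreducible shallow ReLU networks
with `m ≥ 2` neurons in dimension `d ≥ 2`. -/
theorem stmt3 {d : ℕ} (hd : 2 ≤ d) (n m : ℕ) (hn : 0 < n) (hm : 2 ≤ m)
    (x : Fin n → Fin d → ℝ) :
    ∃ (a a' : Fin m → Fin d → ℝ) (b s b' s' : Fin m → ℝ) (c c' : ℝ),
      IrreducibleNet m (reluNet a b s c) ∧
      IrreducibleNet m (reluNet a' b' s' c') ∧
      (∀ j : Fin n, reluNet a b s c (x j) = reluNet a' b' s' c' (x j)) ∧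
      ∃ y : Fin d → ℝ, reluNet a b s c y ≠ reluNet a' b' s' c' y := by
  have h0 : 0 < d := by omega
  have hne : (univ : Finset (Fin n)).Nonempty := ⟨⟨0, hn⟩, mem_univ _⟩
  set B : ℝ := Finset.sup' univ hne (fun j => x j ⟨0,h0⟩) with hB
  refine ⟨fun _ i => if i = (⟨0,h0⟩ : Fin d) then 1 else 0,
    fun _ i => if i = (⟨0,h0⟩ : Fin d) then 1 else 0,
    fun k => -(B + (k:ℕ) + 1), fun _ => 1,
    fun k => -(B + (m:ℕ) + (k:ℕ) + 1), fun _ => 1, 0, 0,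
    irred_line h0 m B, irred_line h0 m (B + m), ?_, ?_⟩
  · intro j
    have hxB : x j ⟨0,h0⟩ ≤ B := by
      rw [hB]; exact Finset.le_sup' (fun j => x j ⟨0,h0⟩) (mem_univ j)
    have hm0 : (0:ℝ) ≤ ((m:ℕ):ℝ) := Nat.cast_nonneg _
    rw [eval_zero h0 B (x j) hxB, eval_zero h0 (B + m) (x j) (by linarith)]
  · refine ⟨fun i => if i = (⟨0,h0⟩ : Fin d) then B + m + 1 else 0, ?_⟩
    rw [line_eval h0, line_eval h0, if_pos rfl]
    simp only [one_mul]
    have hz : (∑ k : Fin m, relu (B + (m:ℝ) + 1 + -(B + (m:ℕ) + (k:ℕ) + 1))) = 0 := by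
      refine Finset.sum_eq_zero fun k _ => ?_
      rw [show B + (m:ℝ) + 1 + -(B + (m:ℕ) + (k:ℕ) + 1) = -((k:ℕ):ℝ) by ring]
      exact relu_of_nonpos (neg_nonpos.mpr (Nat.cast_nonneg _))
    have hpos : (m:ℝ) ≤ ∑ k : Fin m, relu (B + (m:ℝ) + 1 + -(B + (k:ℕ) + 1)) := by
      have h1 := Finset.single_le_sum
        (f := fun k : Fin m => relu (B + (m:ℝ) + 1 + -(B + (k:ℕ) + 1)))
        (fun k _ => relu_nonneg _) (mem_univ (⟨0, by omega⟩ : Fin m))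
      simp only [Fin.val_mk, Nat.cast_zero] at h1
      rw [show B + (m:ℝ) + 1 + -(B + 0 + 1) = (m:ℝ) by ring,
        relu_of_nonneg (Nat.cast_nonneg _)] at h1
      exact h1
    rw [hz]
    have hm2 : (2:ℝ) ≤ (m:ℝ) := by exact_mod_cast hm
    intro hcon
    rw [add_zero, add_zero] at hcon
    linarith
end

section
/- Let σ be the ReLU activation. Assume a_1, …, a_m ∈ ℝ^d \ {0} and b_1, …, b_m ∈ ℝ are such that the hyperplanes H(a_k,b_k), k = 1,…,m, are mutually distinct. Suppose there exist constants c_0, c_1, …, c_m ∈ ℝ and a vector w ∈ ℝ^d such that Σ_{k=1}^m c_k·σ(⟨a_k,x⟩+b_k) + ⟨w, x⟩ + c_0 = 0 for every x ∈ ℝ^d. Then c_0 = c_1 = … = c_m = 0 and w = 0. -/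
open Finset

/-- The hyperplane `H(a,b) = {x : ⟨a,x⟩ + b = 0}`. -/
def hyperplane {d : ℕ} (a : Fin d → ℝ) (b : ℝ) : Set (Fin d → ℝ) :=
  {x | dotp a x + b = 0}

lemma dotp_add {d : ℕ} (a x y : Fin d → ℝ) : dotp a (x + y) = dotp a x + dotp a y := by
  simp [dotp, mul_add, Finset.sum_add_distrib]

lemma dotp_sub {d : ℕ} (a x y : Fin d → ℝ) : dotp a (x - y) = dotp a x - dotp a y := by
  simp [dotp, mul_sub, Finset.sum_sub_distrib]

lemma dotp_smul {d : ℕ} (a : Fin d → ℝ) (t : ℝ) (x : Fin d → ℝ) :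
    dotp a (t • x) = t * dotp a x := by
  simp [dotp, Finset.mul_sum, mul_left_comm]

lemma dotp_smul_left {d : ℕ} (a : Fin d → ℝ) (t : ℝ) (x : Fin d → ℝ) :
    dotp (t • a) x = t * dotp a x := by
  simp [dotp, Finset.mul_sum, mul_assoc]

lemma dotp_sub_left {d : ℕ} (a b x : Fin d → ℝ) : dotp (a - b) x = dotp a x - dotp b x := by
  simp [dotp, sub_mul, Finset.sum_sub_distrib]

lemma dotp_zero {d : ℕ} (a : Fin d → ℝ) : dotp a 0 = 0 := by simp [dotp]

lemma dotp_single {d : ℕ} (w : Fin d → ℝ) (i : Fin d) :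
    dotp w (Pi.single i 1) = w i := by
  simp [dotp, Pi.single_apply, mul_ite, Finset.sum_ite_eq']

lemma exists_avoid {d m : ℕ} (u : Fin m → Fin d → ℝ) (β : Fin m → ℝ)
    (hu : ∀ j, u j ≠ 0 ∨ β j ≠ 0) : ∃ y, ∀ j, dotp (u j) y + β j ≠ 0 := by
  classical
  set p : Fin m → MvPolynomial (Fin d) ℝ :=
    fun j => (∑ i, MvPolynomial.C (u j i) * MvPolynomial.X i) + MvPolynomial.C (β j) with hp
  have heval : ∀ j y, MvPolynomial.eval y (p j) = dotp (u j) y + β j := by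
    intro j y
    simp [hp, dotp, MvPolynomial.eval_sum]
  have hpne : ∀ j, p j ≠ 0 := by
    intro j hzero
    rcases hu j with h | h
    · obtain ⟨i, hi⟩ : ∃ i, u j i ≠ 0 := by
        by_contra hc
        push_neg at hc
        exact h (funext hc)
      have e0 := heval j 0
      have e1 := heval j (Pi.single i 1)
      rw [hzero] at e0 e1
      rw [dotp_single] at e1
      simp [dotp_zero] at e0 e1
      exact hi (by linarith)
    · have e0 := heval j 0
      rw [hzero] at e0
      simp [dotp_zero] at e0
      exact h e0.symm
  by_contra hc
  push_neg at hc
  have hprod : (∏ j, p j) = 0 := by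
    apply MvPolynomial.funext
    intro y
    obtain ⟨j, hj⟩ := hc y
    rw [MvPolynomial.eval_prod, map_zero]
    exact Finset.prod_eq_zero (Finset.mem_univ j) (by rw [heval]; exact hj)
  exact (Finset.prod_ne_zero_iff.2 (fun j _ => hpne j)) hprod

/-- Linear independence lemma for ReLU ridge functions with mutually distinct
hyperplanes, together with an affine term. -/
theorem stmt8 {d m : ℕ} (a : Fin m → Fin d → ℝ) (b : Fin m → ℝ)
    (ha : ∀ k, a k ≠ 0)
    (hH : ∀ k1 k2 : Fin m, k1 ≠ k2 →
      hyperplane (a k1) (b k1) ≠ hyperplane (a k2) (b k2))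
    (c : Fin m → ℝ) (c0 : ℝ) (w : Fin d → ℝ)
    (h : ∀ x : Fin d → ℝ, (∑ k, c k * relu (dotp (a k) x + b k)) + dotp w x + c0 = 0) :
    c0 = 0 ∧ (∀ k, c k = 0) ∧ w = 0 := by
  classical
  have hc : ∀ k, c k = 0 := by
    intro k
    obtain ⟨i₀, hi₀⟩ : ∃ i, a k i ≠ 0 := by
      by_contra hcon; push_neg at hcon; exact ha k (funext hcon)
    -- the "bad" affine functionals on parameter space
    obtain ⟨y, hy⟩ := exists_avoid
      (fun j => if j = k then 0 else a j - (a j i₀ / a k i₀) • a k)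
      (fun j => if j = k then 1 else b j - (a j i₀ / a k i₀) * b k)
      (by
        intro j
        by_cases hjk : j = k
        · right; simp [hjk]
        · by_contra hcon
          push_neg at hcon
          obtain ⟨h1, h2⟩ := hcon
          rw [if_neg hjk] at h1 h2
          have haj : a j = (a j i₀ / a k i₀) • a k := sub_eq_zero.mp h1
          have hbj : b j = (a j i₀ / a k i₀) * b k := sub_eq_zero.mp h2
          have hμ0 : (a j i₀ / a k i₀) ≠ 0 := by
            intro h0
            apply ha j
            rw [haj, h0, zero_smul]
          apply hH j k hjk
          ext x
          simp only [hyperplane, Set.mem_setOf_eq]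
          rw [haj, hbj, dotp_smul_left]
          constructor
          · intro hx
            have hmul : (a j i₀ / a k i₀) * (dotp (a k) x + b k) = 0 := by ring_nf; ring_nf at hx; linarith
            rcases mul_eq_zero.mp hmul with h' | h'
            · exact absurd h' hμ0
            · exact h'
          · intro hx
            have : (a j i₀ / a k i₀) * (dotp (a k) x + b k) = 0 := by rw [hx, mul_zero]
            ring_nf at this ⊢
            linarith)
    set x0 : Fin d → ℝ := y - ((dotp (a k) y + b k) / a k i₀) • (Pi.single i₀ 1 : Fin d → ℝ) with hx0
    obtain ⟨r, hrdef⟩ : ∃ r : Fin m → ℝ, ∀ j, r j = dotp (a j) x0 + b j := ⟨_, fun _ => rfl⟩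
    obtain ⟨q, hqdef⟩ : ∃ q : Fin m → ℝ, ∀ j, q j = dotp (a j) (a k) := ⟨_, fun _ => rfl⟩
    have hrk : r k = 0 := by
      rw [hrdef, hx0, dotp_sub, dotp_smul, dotp_single]
      field_simp
      ring
    have hrj : ∀ j, j ≠ k → r j ≠ 0 := by
      intro j hjk
      have hyj := hy j
      rw [if_neg hjk, if_neg hjk] at hyj
      have : r j = dotp (a j - (a j i₀ / a k i₀) • a k) y + (b j - (a j i₀ / a k i₀) * b k) := by
        rw [hrdef, hx0, dotp_sub, dotp_smul, dotp_single, dotp_sub_left, dotp_smul_left]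
        field_simp
        ring
      rw [this]
      exact hyj
    have hqk : 0 < q k := by
      rw [hqdef]
      exact Finset.sum_pos' (fun i _ => mul_self_nonneg _)
        ⟨i₀, Finset.mem_univ _, mul_self_pos.mpr hi₀⟩
    -- choose small positive t
    have hev : ∀ᶠ t in nhdsWithin 0 (Set.Ioi (0:ℝ)),
        ∀ j ∈ Finset.univ.erase k, |t * q j| < |r j| := by
      rw [Filter.eventually_all_finset]
      intro j hj
      have hrpos : 0 < |r j| := abs_pos.mpr (hrj j (Finset.mem_erase.mp hj).1)
      have htend : Filter.Tendsto (fun t : ℝ => |t * q j|) (nhdsWithin 0 (Set.Ioi 0)) (nhds 0) := by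
        have : Filter.Tendsto (fun t : ℝ => |t * q j|) (nhds 0) (nhds |0 * q j|) :=
          (continuous_abs.comp (continuous_id.mul continuous_const)).tendsto 0
        simpa using this.mono_left nhdsWithin_le_nhds
      exact htend.eventually_lt_const hrpos
    obtain ⟨t, htq, ht⟩ := (hev.and eventually_mem_nhdsWithin).exists
    rw [Set.mem_Ioi] at ht
    -- evaluate the identity at three points
    have e1 : ∀ j, dotp (a j) (x0 + t • a k) + b j = r j + t * q j := by
      intro j; rw [dotp_add, dotp_smul, hrdef, hqdef]; ring
    have e2 : ∀ j, dotp (a j) (x0 - t • a k) + b j = r j - t * q j := by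
      intro j; rw [dotp_sub, dotp_smul, hrdef, hqdef]; ring
    have h1 := h (x0 + t • a k)
    have h2 := h (x0 - t • a k)
    have h0 := h x0
    rw [Finset.sum_congr rfl (fun j _ => by rw [e1]), dotp_add, dotp_smul] at h1
    rw [Finset.sum_congr rfl (fun j _ => by rw [e2]), dotp_sub, dotp_smul] at h2
    rw [Finset.sum_congr rfl (fun j _ => by rw [← hrdef j])] at h0
    -- the second-difference sum
    have hsum : ∑ j, (c j * relu (r j + t * q j) + c j * relu (r j - t * q j)
        - 2 * (c j * relu (r j))) = c k * (t * q k) := by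
      rw [Finset.sum_eq_single k]
      · rw [hrk]
        have h1' : relu (0 + t * q k) = t * q k := by
          simp [relu]
          exact le_of_lt (mul_pos ht hqk)
        have h2' : relu (0 - t * q k) = 0 := by
          simp [relu]
          exact le_of_lt (mul_pos ht hqk)
        have h0' : relu (0:ℝ) = 0 := by simp [relu]
        rw [h1', h2', h0']
        ring
      · intro j _ hjk
        have hlt := htq j (Finset.mem_erase.2 ⟨hjk, Finset.mem_univ j⟩)
        rw [abs_lt] at hlt
        rcases lt_or_gt_of_ne (hrj j hjk) with hneg | hpos
        · have hr1 : r j + t * q j ≤ 0 := by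
            have := abs_of_neg hneg ▸ hlt.2
            linarith [hlt.2, abs_of_neg hneg]
          have hr2 : r j - t * q j ≤ 0 := by
            linarith [hlt.1, abs_of_neg hneg]
          have hr0 : r j ≤ 0 := le_of_lt hneg
          simp [relu, max_eq_right hr1, max_eq_right hr2, max_eq_right hr0]
        · have hr1 : 0 ≤ r j + t * q j := by
            linarith [hlt.1, abs_of_pos hpos]
          have hr2 : 0 ≤ r j - t * q j := by
            linarith [hlt.2, abs_of_pos hpos]
          have hr0 : 0 ≤ r j := le_of_lt hpos
          rw [show relu (r j + t * q j) = r j + t * q j from max_eq_left hr1,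
            show relu (r j - t * q j) = r j - t * q j from max_eq_left hr2,
            show relu (r j) = r j from max_eq_left hr0]
          ring
      · intro hk; exact absurd (Finset.mem_univ k) hk
    rw [Finset.sum_sub_distrib, Finset.sum_add_distrib, ← Finset.mul_sum] at hsum
    have hck : c k * (t * q k) = 0 := by linarith
    rcases mul_eq_zero.mp hck with h' | h'
    · exact h'
    · exact absurd h' (ne_of_gt (mul_pos ht hqk))
  have hc0 : c0 = 0 := by
    have h0 := h 0
    simp [hc, dotp_zero] at h0
    exact h0
  refine ⟨hc0, hc, ?_⟩
  funext i
  have hi := h (Pi.single i 1)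
  simp [hc, dotp_single, hc0] at hi
  exact hi
end
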